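/- arXiv:2503.03909 — 2 statements merged into one kernel-verified Lean document; each statement's English description precedes it below -/
import Mathlib

section
/- Let G ∈ ℝ^{m×n}, let J ⊆ {1,…,n} index a set of columns C = G(:,J) and I ⊆ {1,…,m} index a set of rows R = G(I,:). Then the matrix U = C⁺ G R⁺ minimizes ‖G − C U R‖_F over all matrices U of compatible size, where C⁺, R⁺ denote Moore–Penrose pseudoinverses. -/
open Matrix

/-- The four Moore–Penrose conditions characterizing `Ap` as the pseudoinverse of `A`. -/
def IsMoorePenrose {m k : ℕ} (A : Matrix (Fin m) (Fin k) ℝ)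
    (Ap : Matrix (Fin k) (Fin m) ℝ) : Prop :=
  A * Ap * A = A ∧ Ap * A * Ap = Ap ∧ (A * Ap)ᵀ = A * Ap ∧ (Ap * A)ᵀ = Ap * A

/-- Frobenius norm of a real matrix. -/
noncomputable def frobNorm {m n : ℕ} (A : Matrix (Fin m) (Fin n) ℝ) : ℝ :=
  Real.sqrt (∑ i, ∑ j, (A i j) ^ 2)

lemma trace_eq_sum {m n : ℕ} (A B : Matrix (Fin m) (Fin n) ℝ) :
    (Aᵀ * B).trace = ∑ i, ∑ j, A i j * B i j := by
  simp only [Matrix.trace, Matrix.diag, Matrix.mul_apply, Matrix.transpose_apply]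
  exact Finset.sum_comm

lemma proj_trace_zero {m n : ℕ} (G D : Matrix (Fin m) (Fin n) ℝ)
    (P : Matrix (Fin m) (Fin m) ℝ) (Q : Matrix (Fin n) (Fin n) ℝ)
    (hPt : Pᵀ = P) (hQt : Qᵀ = Q) (hPP : P * P = P) (hQQ : Q * Q = Q)
    (hD : P * D * Q = D) :
    ((G - P * G * Q)ᵀ * (P * G * Q - D)).trace = 0 := by
  have hB : P * G * Q - D = P * (G - D) * Q := by
    rw [Matrix.mul_sub, Matrix.sub_mul, hD]
  have hPAQ : P * (G - P * G * Q) * Q = 0 := by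
    rw [Matrix.mul_sub, Matrix.sub_mul]
    have : P * (P * G * Q) * Q = P * G * Q := by
      simp only [← Matrix.mul_assoc]
      rw [hPP, Matrix.mul_assoc (P * G) Q Q, hQQ]
    rw [this, sub_self]
  have key : ((G - P * G * Q)ᵀ * (P * (G - D) * Q)).trace
      = ((P * (G - P * G * Q) * Q)ᵀ * (G - D)).trace := by
    set A := G - P * G * Q
    set X := G - D
    have h1 : (P * A * Q)ᵀ * X = Q * (Aᵀ * (P * X)) := by
      simp [Matrix.transpose_mul, hPt, hQt, Matrix.mul_assoc]
    rw [h1, Matrix.trace_mul_comm Q]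
    simp only [← Matrix.mul_assoc]
  rw [hB, key, hPAQ]
  simp

lemma sum_sq_expand {m n : ℕ} (A B : Matrix (Fin m) (Fin n) ℝ) :
    ∑ i, ∑ j, (A i j + B i j) ^ 2
      = (∑ i, ∑ j, (A i j) ^ 2) + 2 * (Aᵀ * B).trace + ∑ i, ∑ j, (B i j) ^ 2 := by
  rw [trace_eq_sum]
  have h : ∀ (i : Fin m) (j : Fin n),
      (A i j + B i j) ^ 2 = (A i j) ^ 2 + 2 * (A i j * B i j) + (B i j) ^ 2 := by
    intro i j; ring
  simp_rw [h, Finset.sum_add_distrib, Finset.mul_sum]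

/-- CUR best-approximation property: if `C = G(:,J)` consists of selected columns of `G`,
`R = G(I,:)` of selected rows, and `Cp`, `Rp` are their Moore–Penrose pseudoinverses, then
`U = Cp * G * Rp` minimizes `‖G − C U R‖_F` over all `U`. -/
theorem cur_best_approximation (m n k l : ℕ) (G : Matrix (Fin m) (Fin n) ℝ)
    (jsel : Fin k → Fin n) (isel : Fin l → Fin m)
    (C : Matrix (Fin m) (Fin k) ℝ) (hC : C = G.submatrix id jsel)
    (R : Matrix (Fin l) (Fin n) ℝ) (hR : R = G.submatrix isel id)
    (Cp : Matrix (Fin k) (Fin m) ℝ) (hCp : IsMoorePenrose C Cp)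
    (Rp : Matrix (Fin n) (Fin l) ℝ) (hRp : IsMoorePenrose R Rp) :
    ∀ U : Matrix (Fin k) (Fin l) ℝ,
      frobNorm (G - C * (Cp * G * Rp) * R) ≤ frobNorm (G - C * U * R) := by
  intro U
  obtain ⟨hC1, hC2, hC3, hC4⟩ := hCp
  obtain ⟨hR1, hR2, hR3, hR4⟩ := hRp
  have hPP : (C * Cp) * (C * Cp) = C * Cp := by
    rw [← Matrix.mul_assoc, hC1]
  have hQQ : (Rp * R) * (Rp * R) = Rp * R := by
    rw [Matrix.mul_assoc Rp R (Rp * R), ← Matrix.mul_assoc R Rp R, hR1]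
  have hRQ : R * (Rp * R) = R := by rw [← Matrix.mul_assoc, hR1]
  have hD : (C * Cp) * (C * U * R) * (Rp * R) = C * U * R := by
    simp only [Matrix.mul_assoc]
    rw [hRQ, ← Matrix.mul_assoc C Cp, ← Matrix.mul_assoc (C * Cp) C, hC1]
  have hcross := proj_trace_zero G (C * U * R) (C * Cp) (Rp * R) hC3 hR4 hPP hQQ hD
  have hopt : C * (Cp * G * Rp) * R = (C * Cp) * G * (Rp * R) := by
    simp only [Matrix.mul_assoc]
  set A := G - (C * Cp) * G * (Rp * R) with hA
  set B := (C * Cp) * G * (Rp * R) - C * U * R with hBdef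
  have hsplit : ∀ i j, (G - C * U * R) i j = A i j + B i j := by
    intro i j
    simp [hA, hBdef, Matrix.sub_apply]
  rw [frobNorm, frobNorm, hopt]
  apply Real.sqrt_le_sqrt
  calc ∑ i, ∑ j, ((G - (C * Cp) * G * (Rp * R)) i j) ^ 2
      = ∑ i, ∑ j, (A i j) ^ 2 := by rw [← hA]
    _ ≤ (∑ i, ∑ j, (A i j) ^ 2) + ∑ i, ∑ j, (B i j) ^ 2 := by
        have : (0:ℝ) ≤ ∑ i, ∑ j, (B i j) ^ 2 :=
          Finset.sum_nonneg fun i _ => Finset.sum_nonneg fun j _ => sq_nonneg _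
        linarith
    _ = (∑ i, ∑ j, (A i j) ^ 2) + 2 * (Aᵀ * B).trace + ∑ i, ∑ j, (B i j) ^ 2 := by
        rw [hcross]; ring
    _ = ∑ i, ∑ j, (A i j + B i j) ^ 2 := (sum_sq_expand A B).symm
    _ = ∑ i, ∑ j, ((G - C * U * R) i j) ^ 2 := by simp_rw [hsplit]
end

section
/- If G ∈ ℝ^{m×n} has rank r, and I, J are index sets of size r such that the submatrix G(I,J) is invertible, then the cross approximation is exact: G = G(:,J) · G(I,J)⁻¹ · G(I,:). -/
open Matrix

/-! An entry `A i k` is recovered from the cross by bordering `A(I,J)` with row `i` and column `k`.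
The bordered `(r+1) × (r+1)` submatrix has rank at most `rank A = r`, so it is singular, and by
the Schur complement formula its determinant is `det A(I,J) · (A i k - A(i,J) A(I,J)⁻¹ A(I,k))`.
As `A(I,J)` is invertible, the second factor vanishes. -/

namespace Matrix

variable {K : Type*} [Field K] {m n ι o : Type*} [Fintype ι] [DecidableEq ι]

theorem det_submatrix_eq_zero_of_rank_lt [Fintype n] (A : Matrix m n K) (f : ι → m) (g : ι → n)
    (h : A.rank < Fintype.card ι) : (A.submatrix f g).det = 0 := by
  by_contra hdet
  exact (rank_submatrix_le A f g).not_gt (rank_of_det_ne_zero hdet ▸ h)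

theorem toBlocks₂₂_eq_of_det_eq_zero [Unique o] [DecidableEq o] (M : Matrix (ι ⊕ o) (ι ⊕ o) K)
    (hM₁₁ : IsUnit M.toBlocks₁₁) (hM : M.det = 0) :
    M.toBlocks₂₂ = M.toBlocks₂₁ * M.toBlocks₁₁⁻¹ * M.toBlocks₁₂ := by
  let _ : Invertible M.toBlocks₁₁ := hM₁₁.invertible
  have hdet₁₁ : M.toBlocks₁₁.det ≠ 0 := (isUnit_iff_isUnit_det _).mp hM₁₁ |>.ne_zero
  rw [← fromBlocks_toBlocks M, det_fromBlocks₁₁, invOf_eq_nonsing_inv] at hM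
  have hschur := (mul_eq_zero.mp hM).resolve_left hdet₁₁
  rw [det_unique] at hschur
  ext a b
  rw [Subsingleton.elim a default, Subsingleton.elim b default]
  exact sub_eq_zero.mp hschur

theorem eq_submatrix_mul_inv_mul_submatrix_of_rank_le [Fintype n] (A : Matrix m n K)
    (I : ι → m) (J : ι → n) (hrank : A.rank ≤ Fintype.card ι) (hAIJ : IsUnit (A.submatrix I J)) :
    A = A.submatrix id J * (A.submatrix I J)⁻¹ * A.submatrix I id := by
  ext i k
  let bordered := A.submatrix (Sum.elim I fun _ : Unit => i) (Sum.elim J fun _ : Unit => k)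
  have hsingular : bordered.det = 0 :=
    det_submatrix_eq_zero_of_rank_lt A _ _ (by simpa [Fintype.card_sum] using hrank)
  exact congr_fun₂ (toBlocks₂₂_eq_of_det_eq_zero bordered hAIJ hsingular) () ()

end Matrix

theorem cross_approximation_exact_general (m n r : ℕ) (G : Matrix (Fin m) (Fin n) ℝ)
    (hrank : G.rank = r)
    (isel : Fin r → Fin m)
    (jsel : Fin r → Fin n)
    (hinv : IsUnit (G.submatrix isel jsel)) :
    G = G.submatrix id jsel * (G.submatrix isel jsel)⁻¹ * G.submatrix isel id :=
  G.eq_submatrix_mul_inv_mul_submatrix_of_rank_le isel jsel (by simpa using hrank.le) hinv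

/-- Exactness of cross approximation: if `G` has rank `r` and `I`, `J` are index sets of
size `r` such that the intersection submatrix `G(I,J)` is invertible, then
`G = G(:,J) · G(I,J)⁻¹ · G(I,:)`. -/
theorem cross_approximation_exact (m n r : ℕ) (G : Matrix (Fin m) (Fin n) ℝ)
    (hrank : G.rank = r)
    (isel : Fin r → Fin m) (hi : Function.Injective isel)
    (jsel : Fin r → Fin n) (hj : Function.Injective jsel)
    (hinv : IsUnit (G.submatrix isel jsel)) :
    G = G.submatrix id jsel * (G.submatrix isel jsel)⁻¹ * G.submatrix isel id :=
  cross_approximation_exact_general m n r G hrank isel jsel hinv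
end
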